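/- Let L = (0*1)^n 0* be the language of binary words with exactly n occurrences of the symbol 1. Then W(L) is exactly the set of words w ∈ {A,B}* such that |w|_A ≥ n, |w|_B ≤ n, and every suffix v of w satisfies |v|_A ≥ |v|_B. -/
import Mathlib


/-- Left derivative: `lderiv s T = {v | s :: v ∈ T}`. -/
def lderiv (s : Bool) (T : Set (List Bool)) : Set (List Bool) := {v | s :: v ∈ T}

/-- Winning-set membership. Turn orders are lists over `Bool` with
`false` = A (Alice) and `true` = B (Bob), so that `A < B`. -/
def winW : List Bool → Set (List Bool) → Prop
  | [], T => [] ∈ T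
  | (false :: v), T => winW v (lderiv false T) ∨ winW v (lderiv true T)
  | (true :: v), T => winW v (lderiv false T) ∧ winW v (lderiv true T)

/-- The winning set of a binary language. -/
def winningSet (T : Set (List Bool)) : Set (List Bool) := {w | winW w T}

lemma not_winW_empty : ∀ w : List Bool, ¬ winW w (∅ : Set (List Bool))
  | [] => fun h => h
  | (false :: v) => fun h => h.elim (not_winW_empty v) (not_winW_empty v)
  | (true :: v) => fun h => not_winW_empty v h.1

lemma lderiv_false_n (n : ℕ) :
    lderiv false {v : List Bool | v.count true = n} = {v : List Bool | v.count true = n} := by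
  ext v; simp [lderiv]

lemma lderiv_true_zero :
    lderiv true {v : List Bool | v.count true = 0} = (∅ : Set (List Bool)) := by
  ext v; simp [lderiv]

lemma lderiv_true_succ (m : ℕ) :
    lderiv true {v : List Bool | v.count true = m + 1} = {v : List Bool | v.count true = m} := by
  ext v; simp [lderiv]

lemma suffix_cons_forall (b : Bool) (w : List Bool) (P : List Bool → Prop) :
    (∀ v, v <:+ b :: w → P v) ↔ P (b :: w) ∧ ∀ v, v <:+ w → P v := by
  constructor
  · exact fun h => ⟨h _ (List.suffix_refl _), fun v hv => h v (hv.trans (List.suffix_cons b w))⟩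
  · rintro ⟨h1, h2⟩ v hv
    rcases List.suffix_cons_iff.mp hv with rfl | hv
    · exact h1
    · exact h2 v hv

lemma key (w : List Bool) : ∀ n : ℕ,
    winW w {v : List Bool | v.count true = n} ↔
      n ≤ w.count false ∧ w.count true ≤ n ∧
        ∀ v : List Bool, v <:+ w → v.count true ≤ v.count false := by
  induction w with
  | nil =>
    intro n
    simp only [winW, Set.mem_setOf_eq, List.count_nil]
    constructor
    · rintro rfl
      refine ⟨le_rfl, le_rfl, fun v hv => ?_⟩
      rw [List.suffix_nil.mp hv]; simp
    · rintro ⟨h1, h2, _⟩; omega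
  | cons b w ih =>
    intro n
    cases b with
    | false =>
      simp only [winW]
      rw [lderiv_false_n, ih n, suffix_cons_forall]
      have hS : ∀ v : List Bool, v <:+ w → v.count true ≤ v.count false →
          v.count true ≤ v.count false := fun _ _ h => h
      have hcf : (false :: w).count false = w.count false + 1 := by simp
      have hct : (false :: w).count true = w.count true := by simp
      rw [hcf, hct]
      cases n with
      | zero =>
        rw [lderiv_true_zero]
        constructor
        · rintro (⟨h1, h2, h3⟩ | h)
          · have := h3 w (List.suffix_refl w)
            exact ⟨Nat.zero_le _, h2, by omega, h3⟩
          · exact absurd h (not_winW_empty w)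
        · rintro ⟨h1, h2, h3, h4⟩
          exact Or.inl ⟨Nat.zero_le _, h2, h4⟩
      | succ m =>
        rw [lderiv_true_succ, ih m]
        constructor
        · rintro (⟨h1, h2, h3⟩ | ⟨h1, h2, h3⟩)
          · have := h3 w (List.suffix_refl w)
            exact ⟨by omega, by omega, by omega, h3⟩
          · have := h3 w (List.suffix_refl w)
            exact ⟨by omega, by omega, by omega, h3⟩
        · rintro ⟨h1, h2, h3, h4⟩
          have hww := h4 w (List.suffix_refl w)
          by_cases hc : m + 1 ≤ w.count false
          · exact Or.inl ⟨hc, h2, h4⟩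
          · refine Or.inr ⟨by omega, by omega, h4⟩
    | true =>
      simp only [winW]
      rw [lderiv_false_n, ih n, suffix_cons_forall]
      have hcf : (true :: w).count false = w.count false := by simp
      have hct : (true :: w).count true = w.count true + 1 := by simp
      rw [hcf, hct]
      cases n with
      | zero =>
        rw [lderiv_true_zero]
        constructor
        · rintro ⟨_, h⟩
          exact absurd h (not_winW_empty w)
        · rintro ⟨h1, h2, h3, h4⟩
          omega
      | succ m =>
        rw [lderiv_true_succ, ih m]
        constructor
        · rintro ⟨⟨h1, h2, h3⟩, ⟨h1', h2', h3'⟩⟩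
          exact ⟨h1, by omega, by omega, h3⟩
        · rintro ⟨h1, h2, h3, h4⟩
          exact ⟨⟨h1, by omega, h4⟩, ⟨by omega, by omega, h4⟩⟩

/-- the winning set of the language of words with exactly `n`
ones consists of the words `w` with `|w|_A ≥ n`, `|w|_B ≤ n`, and
`|v|_A ≥ |v|_B` for every suffix `v` of `w` (`A` = `false`, `B` = `true`). -/
theorem winningSet_exactly_n_ones (n : ℕ) :
    winningSet {v : List Bool | v.count true = n} =
      {w : List Bool | n ≤ w.count false ∧ w.count true ≤ n ∧
        ∀ v : List Bool, v <:+ w → v.count true ≤ v.count false} := by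
  ext w
  exact key w n
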